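/- arXiv:1807.03525 — 2 statements merged into one kernel-verified Lean document; each statement's English description precedes it below -/
import Mathlib

section
/- For every integer t ≥ 0 there exists a binary LCD [31t+5, 5, 16t+1] code, i.e., a 5-dimensional linear complementary dual subspace of F_2^(31t+5) with minimum weight 16t+1. -/
/-- The (Hamming) weight of a vector over `F_2`. -/
def wt {n : ℕ} (x : Fin n → ZMod 2) : ℕ :=
  Finset.card (Finset.univ.filter fun i => x i ≠ 0)

/-- The dual code of a binary code `C`, with respect to the standard inner product. -/
def dualCode {n : ℕ} (C : Submodule (ZMod 2) (Fin n → ZMod 2)) :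
    Submodule (ZMod 2) (Fin n → ZMod 2) where
  carrier := {x | ∀ y ∈ C, ∑ i, x i * y i = 0}
  add_mem' := by
    intro a b ha hb y hy
    simp [Pi.add_apply, add_mul, Finset.sum_add_distrib, ha y hy, hb y hy]
  zero_mem' := by
    intro y hy
    simp
  smul_mem' := by
    intro c a ha y hy
    simp only [Pi.smul_apply, smul_eq_mul, mul_assoc, ← Finset.mul_sum, ha y hy, mul_zero]

/-- A binary code is linear complementary dual (LCD) if it meets its dual trivially. -/
def IsLCD {n : ℕ} (C : Submodule (ZMod 2) (Fin n → ZMod 2)) : Prop :=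
  C ⊓ dualCode C = ⊥

/-- The minimum weight of a binary code: the smallest weight of a nonzero codeword. -/
noncomputable def minWt {n : ℕ} (C : Submodule (ZMod 2) (Fin n → ZMod 2)) : ℕ :=
  sInf {w | ∃ x ∈ C, x ≠ 0 ∧ wt x = w}

/-- `dLCD n k` is the largest minimum weight among all binary LCD `[n,k]` codes. -/
noncomputable def dLCD (n k : ℕ) : ℕ :=
  sSup {d | ∃ C : Submodule (ZMod 2) (Fin n → ZMod 2),
    Module.finrank (ZMod 2) C = k ∧ IsLCD C ∧ minWt C = d}

/-!
Let `S` be the `k × (2^k - 1)` matrix over `𝔽₂` whose columns are the nonzero vectors of `𝔽₂^k`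
(a generator matrix of the simplex code) and let `G = [S ⋯ S | I]` consist of `t` copies of `S`
followed by the identity. For `k ≥ 3` the entry `(S Sᵀ)ᵢⱼ` counts the vectors whose `i`-th and
`j`-th coordinates are both `1`, an even number, so `G Gᵀ = I`; by Massey's criterion the code
spanned by the rows of `G` is then LCD. For a nonzero message `m`, exactly half of the vectors `v`
have `m ⬝ v = 1`, so `m G` has weight `2^(k-1)` on each copy of `S` plus `wt m` on the identity
block: the minimum weight is `2^(k-1) t + 1`. The case `k = 5` gives `[31t+5, 5, 16t+1]`.
-/

open Finset Matrix

section CharTwo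

variable {V : Type*} [AddCommGroup V] [Module (ZMod 2) V] [Fintype V]

theorem sum_eq_zero_of_add_right_invariant {R : Type*} [AddCommGroup R] [Module (ZMod 2) R]
    (f : V → R) {e : V} (he : e ≠ 0) (hf : ∀ v, f (v + e) = f v) : ∑ v, f v = 0 :=
  sum_involution (fun v _ => v + e) (fun v _ => by rw [hf, ZModModule.add_self])
    (fun v _ _ h => he (by simpa using h)) (fun _ _ => mem_univ _)
    (fun v _ => by rw [add_assoc, ZModModule.add_self, add_zero])

/-- Translation by any `e` with `φ e = 1` swaps the zeros and the non-zeros of `φ`. -/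
theorem two_mul_card_filter_ne_zero (φ : Module.Dual (ZMod 2) V) (hφ : φ ≠ 0) :
    2 * #{v | φ v ≠ 0} = Fintype.card V := by
  obtain ⟨e, he⟩ : ∃ e, φ e ≠ 0 := by simpa [DFunLike.ne_iff] using hφ
  have h_swap : #{v | φ v ≠ 0} = #{v | ¬φ v ≠ 0} := by
    refine card_nbij' (· + e) (· + e) ?_ ?_ ?_ ?_
    · intro v hv
      have hv1 : φ v = 1 := Fin.eq_one_of_ne_zero _ (mem_filter.1 hv).2
      have he1 : φ e = 1 := Fin.eq_one_of_ne_zero _ he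
      simp [hv1, he1, ZModModule.add_self]
    · intro v hv
      simp_all
    all_goals intro v _; simp [add_assoc, ZModModule.add_self]
  rw [two_mul, ← card_univ]
  nth_rewrite 2 [h_swap]
  exact card_filter_add_card_filter_not _

end CharTwo

theorem hammingNorm_subtype_val {α β : Type*} [Fintype α] [DecidableEq β] [Zero β] {p : α → Prop}
    [DecidablePred p] (x : α → β) (hx : ∀ a, ¬p a → x a = 0) :
    hammingNorm (fun a : Subtype p => x a) = hammingNorm x := by
  simp only [hammingNorm, ← Fintype.card_subtype]
  exact Fintype.card_congr <| Equiv.subtypeSubtypeEquivSubtype (q := fun a => x a ≠ 0)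
    fun {a} h => by_contra fun ha => h (hx a ha)

theorem hammingNorm_comp_equiv {α γ β : Type*} [Fintype α] [Fintype γ] [DecidableEq β] [Zero β]
    (x : α → β) (e : γ ≃ α) : hammingNorm (x ∘ e) = hammingNorm x := by
  simp only [hammingNorm, ← Fintype.card_subtype, Function.comp_apply]
  exact Fintype.card_congr (e.subtypeEquiv fun _ => Iff.rfl)

theorem hammingNorm_comp_fst {α κ β : Type*} [Fintype α] [Fintype κ] [DecidableEq β] [Zero β]
    (x : α → β) : hammingNorm (x ∘ Prod.fst : α × κ → β) = hammingNorm x * Fintype.card κ := by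
  simp only [hammingNorm, ← Fintype.card_subtype, Function.comp_apply]
  rw [← Fintype.card_prod]
  exact Fintype.card_congr (Equiv.prodSubtypeFstEquivSubtypeProd (p := fun a => x a ≠ 0))

theorem hammingNorm_sumElim {α γ β : Type*} [Fintype α] [Fintype γ] [DecidableEq β] [Zero β]
    (x : α → β) (y : γ → β) : hammingNorm (Sum.elim x y) = hammingNorm x + hammingNorm y := by
  simp only [hammingNorm, ← Fintype.card_subtype]
  rw [← Fintype.card_sum]
  exact Fintype.card_congr Equiv.subtypeSum

theorem hammingNorm_single_one {ι R : Type*} [Fintype ι] [DecidableEq ι] [DecidableEq R]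
    [Zero R] [One R] [NeZero (1 : R)] (i : ι) : hammingNorm (Pi.single i 1 : ι → R) = 1 := by
  simp [hammingNorm, Pi.single_apply, filter_eq']

theorem submatrix_fst_mul_transpose {m n κ R : Type*} [Fintype n] [Fintype κ] [CommSemiring R]
    (A : Matrix m n R) :
    A.submatrix id (Prod.fst : n × κ → n) * (A.submatrix id (Prod.fst : n × κ → n))ᵀ =
      Fintype.card κ • (A * Aᵀ) := by
  ext i j
  simp [mul_apply, Fintype.sum_prod_type, Finset.smul_sum]

theorem vecMul_injective_of_isUnit_mul_transpose {K κ ι : Type*} [Field K] [Fintype κ]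
    [DecidableEq κ] [Fintype ι] {G : Matrix κ ι K} (hG : IsUnit (G * Gᵀ)) :
    Function.Injective (· ᵥ* G) := by
  intro m m' h
  apply vecMul_injective_iff_isUnit.2 hG
  simp only [← vecMul_vecMul, h]

section GeneratorMatrix

variable {κ : Type*} [Fintype κ] [DecidableEq κ] {n : ℕ} {G : Matrix κ (Fin n) (ZMod 2)}

theorem finrank_range_vecMulLinear (hG : IsUnit (G * Gᵀ)) :
    Module.finrank (ZMod 2) (LinearMap.range G.vecMulLinear) = Fintype.card κ := by
  rw [LinearMap.finrank_range_of_inj (vecMul_injective_of_isUnit_mul_transpose hG),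
    Module.finrank_fintype_fun_eq_card]

theorem isLCD_range_vecMulLinear (hG : IsUnit (G * Gᵀ)) :
    IsLCD (LinearMap.range G.vecMulLinear) := by
  rw [IsLCD, eq_bot_iff]
  rintro _ ⟨⟨m, rfl⟩, h_dual⟩
  have h_orth : ∀ m', m ᵥ* (G * Gᵀ) ⬝ᵥ m' = 0 := fun m' => by
    rw [← vecMul_vecMul, ← dotProduct_mulVec, mulVec_transpose]
    exact h_dual _ ⟨m', rfl⟩
  have hm : m = 0 := vecMul_injective_iff_isUnit.2 hG <| by
    simpa using dotProduct_eq_zero _ h_orth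
  simp [hm]

end GeneratorMatrix

theorem minWt_eq_of_le_wt {n d : ℕ} {C : Submodule (ZMod 2) (Fin n → ZMod 2)}
    (h_le : ∀ x ∈ C, x ≠ 0 → d ≤ wt x) {x : Fin n → ZMod 2} (hx : x ∈ C) (hx0 : x ≠ 0)
    (hxd : wt x = d) : minWt C = d :=
  le_antisymm (Nat.sInf_le ⟨x, hx, hx0, hxd⟩)
    (le_csInf ⟨d, x, hx, hx0, hxd⟩ fun _ ⟨y, hy, hy0, hyw⟩ => hyw ▸ h_le y hy hy0)

def simplexMatrix (k : ℕ) : Matrix (Fin k) {v : Fin k → ZMod 2 // v ≠ 0} (ZMod 2) :=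
  Matrix.of fun i v => v.1 i

section Simplex

variable {k : ℕ}

theorem card_ne_zero_vectors (k : ℕ) :
    Fintype.card {v : Fin k → ZMod 2 // v ≠ 0} = 2 ^ k - 1 := by
  rw [Fintype.card_subtype_compl, Fintype.card_fun, ZMod.card, Fintype.card_fin,
    Fintype.card_subtype_eq]

theorem hammingNorm_vecMul_simplexMatrix {m : Fin k → ZMod 2} (hm : m ≠ 0) :
    hammingNorm (m ᵥ* simplexMatrix k) = 2 ^ (k - 1) := by
  obtain ⟨i, -⟩ := Function.ne_iff.1 hm
  have h_pow : 2 ^ k = 2 * 2 ^ (k - 1) := by rw [← pow_succ']; congr; have := i.pos; omega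
  have h_half := two_mul_card_filter_ne_zero (dotProductEquiv (ZMod 2) (Fin k) m)
    (by simpa using hm)
  rw [Fintype.card_fun, ZMod.card, Fintype.card_fin, h_pow] at h_half
  have h_norm : hammingNorm (m ᵥ* simplexMatrix k) = hammingNorm (fun v => m ⬝ᵥ v) :=
    hammingNorm_subtype_val (fun v => m ⬝ᵥ v) fun v hv => by simp [not_not.1 hv]
  rw [h_norm]
  simpa [hammingNorm] using h_half

theorem simplexMatrix_mul_transpose (hk : 3 ≤ k) : simplexMatrix k * (simplexMatrix k)ᵀ = 0 := by
  ext i j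
  obtain ⟨l, -, hl⟩ : ∃ l ∈ univ, l ∉ ({i, j} : Finset (Fin k)) :=
    exists_mem_notMem_of_card_lt_card <| by
      rw [card_univ, Fintype.card_fin]; exact card_le_two.trans_lt hk
  simp only [mem_insert, mem_singleton, not_or] at hl
  have h_all : ∑ v : Fin k → ZMod 2, v i * v j = 0 :=
    sum_eq_zero_of_add_right_invariant _ (Pi.single_ne_zero_iff.2 one_ne_zero : Pi.single l 1 ≠ 0)
      fun v => by simp [Ne.symm hl.1, Ne.symm hl.2]
  have h_nonzero : ∑ u : {v : Fin k → ZMod 2 // v ≠ 0}, u.1 i * u.1 j =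
      ∑ v : Fin k → ZMod 2, v i * v j := by
    rw [← sum_subtype (univ.filter (· ≠ 0)) (by simp) fun v : Fin k → ZMod 2 => v i * v j,
      sum_filter_of_ne]
    rintro v - hv rfl
    simp at hv
  rw [mul_apply, Matrix.zero_apply, ← h_all, ← h_nonzero]
  rfl

end Simplex

/-- `[S ⋯ S | I]`, with `t` copies of `S = simplexMatrix k`. -/
def simplexRepeatMatrix (k t : ℕ) :
    Matrix (Fin k) (({v : Fin k → ZMod 2 // v ≠ 0} × Fin t) ⊕ Fin k) (ZMod 2) :=
  fromCols ((simplexMatrix k).submatrix id (Prod.fst : _ × Fin t → _)) 1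

section SimplexRepeat

variable {k t : ℕ}

theorem card_simplexRepeat_cols (k t : ℕ) :
    Fintype.card (({v : Fin k → ZMod 2 // v ≠ 0} × Fin t) ⊕ Fin k) = (2 ^ k - 1) * t + k := by
  rw [Fintype.card_sum, Fintype.card_prod, card_ne_zero_vectors, Fintype.card_fin,
    Fintype.card_fin]

theorem simplexRepeatMatrix_mul_transpose (hk : 3 ≤ k) :
    simplexRepeatMatrix k t * (simplexRepeatMatrix k t)ᵀ = 1 := by
  rw [simplexRepeatMatrix, transpose_fromCols, fromCols_mul_fromRows, submatrix_fst_mul_transpose,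
    simplexMatrix_mul_transpose hk, smul_zero, zero_add, transpose_one, one_mul]

theorem hammingNorm_vecMul_simplexRepeatMatrix {m : Fin k → ZMod 2} (hm : m ≠ 0) :
    hammingNorm (m ᵥ* simplexRepeatMatrix k t) = 2 ^ (k - 1) * t + hammingNorm m := by
  rw [simplexRepeatMatrix, vecMul_fromCols, hammingNorm_sumElim, vecMul_one]
  have h_rep : m ᵥ* (simplexMatrix k).submatrix id (Prod.fst : _ × Fin t → _) =
      (m ᵥ* simplexMatrix k) ∘ Prod.fst := rfl
  rw [h_rep, hammingNorm_comp_fst, hammingNorm_vecMul_simplexMatrix hm, Fintype.card_fin]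

end SimplexRepeat

theorem exists_lcd_simplexRepeat {k : ℕ} (hk : 3 ≤ k) (t : ℕ) :
    ∃ C : Submodule (ZMod 2) (Fin ((2 ^ k - 1) * t + k) → ZMod 2),
      Module.finrank (ZMod 2) C = k ∧ IsLCD C ∧ minWt C = 2 ^ (k - 1) * t + 1 := by
  let e := Fintype.equivFinOfCardEq (card_simplexRepeat_cols k t)
  let G := (simplexRepeatMatrix k t).submatrix id e.symm
  have hG : IsUnit (G * Gᵀ) := by
    simp only [G, transpose_submatrix, submatrix_mul_equiv, submatrix_id_id,
      simplexRepeatMatrix_mul_transpose hk, isUnit_one]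
  have h_wt : ∀ m ≠ 0, wt (m ᵥ* G) = 2 ^ (k - 1) * t + hammingNorm m := fun m hm =>
    (hammingNorm_comp_equiv _ e.symm).trans (hammingNorm_vecMul_simplexRepeatMatrix hm)
  let u : Fin k → ZMod 2 := Pi.single ⟨0, by omega⟩ 1
  have hu : u ≠ 0 := by simp [u]
  refine ⟨LinearMap.range G.vecMulLinear, by rw [finrank_range_vecMulLinear hG, Fintype.card_fin],
    isLCD_range_vecMulLinear hG, minWt_eq_of_le_wt ?_ ⟨u, rfl⟩ ?_ ?_⟩
  · rintro _ ⟨m, rfl⟩ hx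
    have hm : m ≠ 0 := by rintro rfl; simp at hx
    rw [vecMulLinear_apply, h_wt m hm]
    have := hammingNorm_pos_iff.2 hm
    omega
  · exact (vecMul_injective_of_isUnit_mul_transpose hG).ne_iff' (zero_vecMul G) |>.2 hu
  · rw [vecMulLinear_apply, h_wt u hu, hammingNorm_single_one]

theorem exists_lcd_31t5 (t : ℕ) :
    ∃ C : Submodule (ZMod 2) (Fin (31 * t + 5) → ZMod 2),
      Module.finrank (ZMod 2) C = 5 ∧ IsLCD C ∧ minWt C = 16 * t + 1 :=
  exists_lcd_simplexRepeat (k := 5) (by norm_num) t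
end

section
/- For every integer t ≥ 1 there exists a binary LCD [31t+22, 5, 16t+10] code, i.e., a 5-dimensional linear complementary dual subspace of F_2^(31t+22) with minimum weight 16t+10. -/
set_option maxRecDepth 20000
set_option maxHeartbeats 4000000

namespace LCDAux

/-- Row masks of a generator matrix of an LCD `[22,5,10]` code. -/
def g2mask : Fin 5 → ℕ := ![2184190, 3982854, 582237, 3861951, 1994794]

/-- Codeword of the `[22,5,10]` code at coordinate `i`, for message `m`. -/
def grow (m : Fin 5 → ZMod 2) (i : ℕ) : ZMod 2 :=
  ∑ j, m j * (if Nat.testBit (g2mask j) i then 1 else 0)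

/-- Codeword of the simplex `[31,5,16]` code at coordinate `i`, for message `m`. -/
def srow (m : Fin 5 → ZMod 2) (i : ℕ) : ZMod 2 :=
  ∑ j, m j * (if Nat.testBit (i+1) (j:ℕ) then 1 else 0)

/-- Codeword of the combined code at coordinate `i`. -/
def row (m : Fin 5 → ZMod 2) (i : ℕ) : ZMod 2 :=
  if i < 22 then grow m i else srow m ((i - 22) % 31)

lemma simplex_wt : ∀ m : Fin 5 → ZMod 2, m ≠ 0 →
    ((Finset.range 31).filter (fun i => srow m i ≠ 0)).card = 16 := by decide

lemma simplex_orth : ∀ m m' : Fin 5 → ZMod 2,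
    ∑ i ∈ Finset.range 31, srow m i * srow m' i = 0 := by decide

lemma g2_wt_ge : ∀ m : Fin 5 → ZMod 2, m ≠ 0 →
    10 ≤ ((Finset.range 22).filter (fun i => grow m i ≠ 0)).card := by decide

def m0 : Fin 5 → ZMod 2 := fun j => if j = 1 then 1 else 0

lemma m0_ne : m0 ≠ 0 := by decide

lemma g2_wt_ten :
    ((Finset.range 22).filter (fun i => grow m0 i ≠ 0)).card = 10 := by decide

lemma g2_lcd : ∀ m : Fin 5 → ZMod 2,
    (∀ m', ∑ i ∈ Finset.range 22, grow m i * grow m' i = 0) → m = 0 := by decide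

lemma grow_add (a b : Fin 5 → ZMod 2) (i : ℕ) :
    grow (a + b) i = grow a i + grow b i := by
  unfold grow
  rw [← Finset.sum_add_distrib]
  exact Finset.sum_congr rfl fun j _ => add_mul _ _ _

lemma srow_add (a b : Fin 5 → ZMod 2) (i : ℕ) :
    srow (a + b) i = srow a i + srow b i := by
  unfold srow
  rw [← Finset.sum_add_distrib]
  exact Finset.sum_congr rfl fun j _ => add_mul _ _ _

lemma grow_smul (c : ZMod 2) (a : Fin 5 → ZMod 2) (i : ℕ) :
    grow (c • a) i = c * grow a i := by
  simp [grow, Finset.mul_sum, mul_assoc]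

lemma srow_smul (c : ZMod 2) (a : Fin 5 → ZMod 2) (i : ℕ) :
    srow (c • a) i = c * srow a i := by
  simp [srow, Finset.mul_sum, mul_assoc]

lemma row_add (a b : Fin 5 → ZMod 2) (i : ℕ) :
    row (a + b) i = row a i + row b i := by
  unfold row; split <;> simp [grow_add, srow_add]

lemma row_smul (c : ZMod 2) (a : Fin 5 → ZMod 2) (i : ℕ) :
    row (c • a) i = c * row a i := by
  unfold row; split <;> simp [grow_smul, srow_smul]

/-- The encoding map of the combined code of length `N`. -/
def Phi (N : ℕ) : (Fin 5 → ZMod 2) →ₗ[ZMod 2] (Fin N → ZMod 2) where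
  toFun m := fun i => row m (i : ℕ)
  map_add' a b := funext fun i => row_add a b i
  map_smul' c a := funext fun i => row_smul c a i

lemma sum_range_add' {M : Type*} [AddCommMonoid M] (f : ℕ → M) (a b : ℕ) :
    ∑ i ∈ Finset.range (a + b), f i
      = ∑ i ∈ Finset.range a, f i + ∑ j ∈ Finset.range b, f (a + j) := by
  induction b with
  | zero => simp
  | succ b ih =>
      rw [show a + (b+1) = (a+b)+1 by omega, Finset.sum_range_succ, ih,
        Finset.sum_range_succ, add_assoc]

lemma row_tail (m : Fin 5 → ZMod 2) (j : ℕ) (hj : j < 31) :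
    row m (22 + j) = srow m j := by
  unfold row
  rw [if_neg (by omega)]
  congr 1
  omega

lemma row_period (m : Fin 5 → ZMod 2) (t j : ℕ) (hj : j < 31) :
    row m (31 * t + 22 + j) = row m (22 + j) := by
  rw [row_tail m j hj]
  unfold row
  rw [if_neg (by omega)]
  congr 1
  have h1 : 31 * t + 22 + j - 22 = 31 * t + j := by omega
  rw [h1, Nat.mul_add_mod, Nat.mod_eq_of_lt hj]

lemma split_sum {M : Type*} [AddCommMonoid M] (h : ℕ → M)
    (hp : ∀ t j, j < 31 → h (31 * t + 22 + j) = h (22 + j)) (t : ℕ) :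
    ∑ i ∈ Finset.range (31 * t + 22), h i
      = ∑ i ∈ Finset.range 22, h i + t • (∑ j ∈ Finset.range 31, h (22 + j)) := by
  induction t with
  | zero => simp
  | succ t ih =>
      rw [show 31 * (t+1) + 22 = (31 * t + 22) + 31 by ring, sum_range_add', ih]
      have : ∑ j ∈ Finset.range 31, h (31 * t + 22 + j)
          = ∑ j ∈ Finset.range 31, h (22 + j) :=
        Finset.sum_congr rfl fun j hj => hp t j (Finset.mem_range.mp hj)
      rw [this, succ_nsmul, add_assoc]

lemma wt_phi (t : ℕ) (m : Fin 5 → ZMod 2) (hm : m ≠ 0) :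
    wt (Phi (31 * t + 22) m)
      = ((Finset.range 22).filter (fun i => grow m i ≠ 0)).card + t * 16 := by
  have h1 : wt (Phi (31 * t + 22) m)
      = ∑ i ∈ Finset.range (31 * t + 22), (if row m i ≠ 0 then 1 else 0) := by
    rw [wt, Finset.card_filter]
    exact Fin.sum_univ_eq_sum_range (fun i => if row m i ≠ 0 then 1 else 0) _
  have h2 := split_sum (fun i => if row m i ≠ 0 then (1:ℕ) else 0)
      (fun t j hj => by simp only [row_period m t j hj]) t
  have hA : ∑ i ∈ Finset.range 22, (if row m i ≠ 0 then (1:ℕ) else 0)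
      = ((Finset.range 22).filter (fun i => grow m i ≠ 0)).card := by
    rw [Finset.card_filter]
    refine Finset.sum_congr rfl fun i hi => ?_
    have : row m i = grow m i := if_pos (Finset.mem_range.mp hi)
    rw [this]
  have hB : ∑ j ∈ Finset.range 31, (if row m (22 + j) ≠ 0 then (1:ℕ) else 0) = 16 := by
    have h3 : ∑ j ∈ Finset.range 31, (if row m (22 + j) ≠ 0 then (1:ℕ) else 0)
        = ((Finset.range 31).filter (fun i => srow m i ≠ 0)).card := by
      rw [Finset.card_filter]
      refine Finset.sum_congr rfl fun j hj => ?_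
      rw [row_tail m j (Finset.mem_range.mp hj)]
    rw [h3, simplex_wt m hm]
  rw [h1, h2, hA, hB, smul_eq_mul]

lemma ip_phi (t : ℕ) (m m' : Fin 5 → ZMod 2) :
    ∑ i, (Phi (31 * t + 22) m) i * (Phi (31 * t + 22) m') i
      = ∑ i ∈ Finset.range 22, grow m i * grow m' i := by
  have h1 : ∑ i, (Phi (31 * t + 22) m) i * (Phi (31 * t + 22) m') i
      = ∑ i ∈ Finset.range (31 * t + 22), row m i * row m' i :=
    Fin.sum_univ_eq_sum_range (fun i => row m i * row m' i) _
  rw [h1, split_sum (fun i => row m i * row m' i)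
      (fun t j hj => by simp only [row_period m t j hj, row_period m' t j hj]) t]
  have h2 : ∑ j ∈ Finset.range 31, row m (22 + j) * row m' (22 + j)
      = ∑ j ∈ Finset.range 31, srow m j * srow m' j := by
    refine Finset.sum_congr rfl fun j hj => ?_
    rw [row_tail m j (Finset.mem_range.mp hj), row_tail m' j (Finset.mem_range.mp hj)]
  rw [h2, simplex_orth m m', smul_zero, add_zero]
  refine Finset.sum_congr rfl fun i hi => ?_
  have hi' := Finset.mem_range.mp hi
  have e1 : row m i = grow m i := if_pos hi'
  have e2 : row m' i = grow m' i := if_pos hi'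
  rw [e1, e2]

lemma phi_inj (t : ℕ) (m : Fin 5 → ZMod 2) (h : Phi (31 * t + 22) m = 0) : m = 0 := by
  by_contra hm
  have h10 := g2_wt_ge m hm
  have hzero : ((Finset.range 22).filter (fun i => grow m i ≠ 0)).card = 0 := by
    rw [Finset.card_eq_zero, Finset.filter_eq_empty_iff]
    intro i hi
    have hi' := Finset.mem_range.mp hi
    have hiN : i < 31 * t + 22 := by omega
    have := congrFun h ⟨i, hiN⟩
    simp only [Pi.zero_apply] at this
    have hrow : row m i = 0 := this
    rw [row, if_pos hi'] at hrow
    simp [hrow]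
  omega

end LCDAux

theorem exists_lcd_31t22 (t : ℕ) (ht : 1 ≤ t) :
    ∃ C : Submodule (ZMod 2) (Fin (31 * t + 22) → ZMod 2),
      Module.finrank (ZMod 2) C = 5 ∧ IsLCD C ∧ minWt C = 16 * t + 10 := by
  classical
  set N := 31 * t + 22 with hN
  refine ⟨LinearMap.range (LCDAux.Phi N), ?_, ?_, ?_⟩
  · have hinj : Function.Injective (LCDAux.Phi N) := by
      rw [← LinearMap.ker_eq_bot, Submodule.eq_bot_iff]
      intro m hm
      exact LCDAux.phi_inj t m hm
    rw [LinearMap.finrank_range_of_inj hinj, Module.finrank_pi]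
    simp
  · rw [IsLCD, eq_bot_iff]
    intro x hx
    obtain ⟨hxC, hxD⟩ := Submodule.mem_inf.mp hx
    obtain ⟨m, rfl⟩ := hxC
    have hdual : ∀ y ∈ LinearMap.range (LCDAux.Phi N),
        ∑ i, (LCDAux.Phi N m) i * y i = 0 := hxD
    have hB : ∀ m', ∑ i ∈ Finset.range 22, LCDAux.grow m i * LCDAux.grow m' i = 0 := by
      intro m'
      have := hdual (LCDAux.Phi N m') ⟨m', rfl⟩
      rwa [LCDAux.ip_phi t m m'] at this
    have hm0 : m = 0 := LCDAux.g2_lcd m hB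
    rw [hm0, map_zero]
    exact Submodule.zero_mem ⊥
  · have hmem : (16 * t + 10) ∈
        {w | ∃ x ∈ LinearMap.range (LCDAux.Phi N), x ≠ 0 ∧ wt x = w} := by
      refine ⟨LCDAux.Phi N LCDAux.m0, ⟨LCDAux.m0, rfl⟩, ?_, ?_⟩
      · intro h
        exact LCDAux.m0_ne (LCDAux.phi_inj t LCDAux.m0 h)
      · rw [LCDAux.wt_phi t LCDAux.m0 LCDAux.m0_ne, LCDAux.g2_wt_ten]
        omega
    refine le_antisymm (Nat.sInf_le hmem) (le_csInf ⟨_, hmem⟩ ?_)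
    rintro w ⟨x, hxC, hx0, rfl⟩
    obtain ⟨m, rfl⟩ := hxC
    have hm : m ≠ 0 := by
      rintro rfl
      exact hx0 (map_zero _)
    rw [LCDAux.wt_phi t m hm]
    have := LCDAux.g2_wt_ge m hm
    omega
end
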